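/- arXiv:2109.07619 — 6 statements merged into one kernel-verified Lean document; each statement's English description precedes it below -/
import Mathlib

section
/- If L is an infinite computable linear order, then either L has a computable infinite descending sequence, or L has a 0'-computable infinite ascending sequence. -/
/-- Partial recursiveness relative to an oracle `O : ℕ → ℕ`. -/
inductive RecursiveInOracle (O : ℕ → ℕ) : (ℕ →. ℕ) → Prop
  | zero : RecursiveInOracle O (pure 0)
  | succ : RecursiveInOracle O ↑Nat.succ
  | left : RecursiveInOracle O ↑fun n : ℕ => n.unpair.1
  | right : RecursiveInOracle O ↑fun n : ℕ => n.unpair.2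
  | oracle : RecursiveInOracle O ↑O
  | pair {f g : ℕ →. ℕ} : RecursiveInOracle O f → RecursiveInOracle O g →
      RecursiveInOracle O fun n => Nat.pair <$> f n <*> g n
  | comp {f g : ℕ →. ℕ} : RecursiveInOracle O f → RecursiveInOracle O g →
      RecursiveInOracle O fun n => g n >>= f
  | prec {f g : ℕ →. ℕ} : RecursiveInOracle O f → RecursiveInOracle O g →
      RecursiveInOracle O (Nat.unpaired fun a n =>
        n.rec (f a) fun y IH => do let i ← IH; g (Nat.pair a (Nat.pair y i)))
  | rfind {f : ℕ →. ℕ} : RecursiveInOracle O f →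
      RecursiveInOracle O fun a => Nat.rfind fun n => (fun m => m = 0) <$> f (Nat.pair a n)

open Classical in
/-- The halting problem `0'` as a 0-1 valued function: on input `n = ⟨e, x⟩`,
decide whether the `e`-th partial recursive function halts on `x`. -/
noncomputable def jump : ℕ → ℕ := fun n =>
  if ((Denumerable.ofNat Nat.Partrec.Code n.unpair.1).eval n.unpair.2).Dom then 1 else 0

/-!
If `L` has no least element, repeatedly searching for some smaller element is a computable
descending sequence. If some non-maximal `x₀` has no immediate successor, the same search started
above `x₀` and restricted to elements above `x₀` never gets stuck. Otherwise, start at the least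
element and iterate the immediate-successor function: whether nothing lies strictly between `x` and
`y` is a co-r.e. question, which `0'` answers. Every element reached has a finite down-set, so,
`L` being infinite, it is not maximal and the iteration goes on forever.
-/

namespace RecursiveInOracle

variable {O : ℕ → ℕ}

theorem of_eq {f g : ℕ →. ℕ} (hf : RecursiveInOracle O f) (H : ∀ n, f n = g n) :
    RecursiveInOracle O g :=
  funext H ▸ hf

theorem of_nat_partrec {f : ℕ →. ℕ} (hf : Nat.Partrec f) : RecursiveInOracle O f := by
  induction hf with
  | zero => exact zero
  | succ => exact succ
  | left => exact left
  | right => exact right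
  | pair _ _ pf pg => exact pair pf pg
  | comp _ _ pf pg => exact comp pf pg
  | prec _ _ pf pg => exact prec pf pg
  | rfind _ pf => exact rfind pf

theorem of_computable {f : ℕ → ℕ} (hf : Computable f) : RecursiveInOracle O ↑f :=
  of_nat_partrec (Partrec.nat_iff.1 hf.partrec)

theorem nat_partrec_of_zero {f : ℕ →. ℕ} (hf : RecursiveInOracle (fun _ => 0) f) :
    Nat.Partrec f := by
  induction hf with
  | zero => exact .zero
  | succ => exact .succ
  | left => exact .left
  | right => exact .right
  | oracle => exact Nat.Partrec.zero
  | pair _ _ pf pg => exact .pair pf pg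
  | comp _ _ pf pg => exact .comp pf pg
  | prec _ _ pf pg => exact .prec pf pg
  | rfind _ pf => exact .rfind pf

theorem computable_of_zero {f : ℕ → ℕ} (hf : RecursiveInOracle (fun _ => 0) ↑f) :
    Computable f :=
  Partrec.nat_iff.2 (nat_partrec_of_zero hf)

theorem comp_total {f g : ℕ → ℕ} (hf : RecursiveInOracle O ↑f) (hg : RecursiveInOracle O ↑g) :
    RecursiveInOracle O ↑(f ∘ g) :=
  (hf.comp hg).of_eq fun _ => Part.bind_some _ _

theorem pair_total {f g : ℕ → ℕ} (hf : RecursiveInOracle O ↑f) (hg : RecursiveInOracle O ↑g) :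
    RecursiveInOracle O ↑fun n => Nat.pair (f n) (g n) := by
  refine (hf.pair hg).of_eq fun n => ?_
  simp [Seq.seq]

theorem iterate_bind {step : ℕ →. ℕ} (h : RecursiveInOracle O step) (m : ℕ) :
    RecursiveInOracle O fun n => (fun x : Part ℕ => x.bind step)^[n] (Part.some m) := by
  have hunpair : Computable fun w : ℕ => w.unpair.2.unpair.2 :=
    (Primrec.snd.comp (Primrec.unpair.comp (Primrec.snd.comp Primrec.unpair))).to_comp
  have hrec := (prec (of_computable (Computable.const m)) (h.comp (of_computable hunpair))).comp
    (of_computable (Primrec₂.natPair.comp (Primrec.const 0) Primrec.id).to_comp)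
  refine hrec.of_eq fun n => ?_
  symm
  induction n with
  | zero => simp [Nat.unpaired]
  | succ n ih =>
    rw [Function.iterate_succ_apply', ih]
    simp only [Nat.unpaired, PFun.coe_val, id_eq, Nat.unpair_pair, Part.bind_eq_bind,
      Part.bind_some]
    congr 1
    funext i
    exact (Part.bind_some i step).symm

theorem exists_orbit {step : ℕ →. ℕ} (h : RecursiveInOracle O step) {R : ℕ → ℕ → Prop}
    {P : ℕ → Prop} {m : ℕ} (hm : P m) (hstep : ∀ x, P x → ∃ y ∈ step x, R x y ∧ P y) :
    ∃ a : ℕ → ℕ, RecursiveInOracle O ↑a ∧ ∀ n, R (a n) (a (n + 1)) := by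
  set F := fun n => (fun x : Part ℕ => x.bind step)^[n] (Part.some m)
  have hF_succ : ∀ n, F (n + 1) = (F n).bind step := fun n =>
    Function.iterate_succ_apply' _ n _
  have hF : ∀ n, ∃ x ∈ F n, P x := by
    intro n
    induction n with
    | zero => exact ⟨m, Part.mem_some m, hm⟩
    | succ n ih =>
      obtain ⟨x, hx, hPx⟩ := ih
      obtain ⟨y, hy, -, hPy⟩ := hstep x hPx
      exact ⟨y, hF_succ n ▸ Part.mem_bind hx hy, hPy⟩
  choose a ha hPa using hF
  refine ⟨a, (h.iterate_bind m).of_eq fun n => Part.eq_some_iff.2 (ha n), fun n => ?_⟩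
  obtain ⟨y, hy, hR, -⟩ := hstep (a n) (hPa n)
  obtain ⟨x, hx, hxy⟩ := Part.mem_bind_iff.1 (hF_succ n ▸ ha (n + 1))
  rw [Part.mem_unique hx (ha n)] at hxy
  rwa [Part.mem_unique hxy hy]

end RecursiveInOracle

/-- The test `q n = 0` is the one performed by `RecursiveInOracle.rfind`. -/
def DecidableInOracle (O : ℕ → ℕ) (p : ℕ → Prop) : Prop :=
  ∃ q : ℕ → ℕ, RecursiveInOracle O ↑q ∧ ∀ n, q n = 0 ↔ p n

theorem ComputablePred.decidableInOracle {p : ℕ → Prop} (hp : ComputablePred p) (O : ℕ → ℕ) :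
    DecidableInOracle O p := by
  obtain ⟨f, hf, rfl⟩ := ComputablePred.computable_iff.1 hp
  refine ⟨fun n => cond (f n) 0 1,
    .of_computable (hf.cond (Computable.const 0) (Computable.const 1)), fun n => ?_⟩
  cases h : f n <;> simp [h]

theorem REPred.decidableInOracle_jump {p : ℕ → Prop} (hp : REPred p) :
    DecidableInOracle jump p := by
  obtain ⟨c, hc⟩ := Nat.Partrec.Code.exists_code.1
    (Partrec.nat_iff.1 (hp.map (Computable.const 0).to₂))
  have hdom : ∀ n, (c.eval n).Dom ↔ p n := fun n => by
    rw [hc]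
    exact ⟨fun ⟨h, _⟩ => h, fun h => ⟨h, trivial⟩⟩
  have hpair : Computable fun n => Nat.pair (Encodable.encode c) n :=
    (Primrec₂.natPair.comp (Primrec.const _) Primrec.id).to_comp
  refine ⟨(fun k => 1 - k) ∘ jump ∘ fun n => Nat.pair (Encodable.encode c) n,
    .comp_total (.of_computable (Primrec.nat_sub.comp (Primrec.const 1) Primrec.id).to_comp)
      (.comp_total .oracle (.of_computable hpair)), fun n => ?_⟩
  by_cases h : p n <;> simp [jump, Denumerable.ofNat_encode, hdom, h]

namespace DecidableInOracle

variable {O : ℕ → ℕ}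

protected theorem not {p : ℕ → Prop} (hp : DecidableInOracle O p) :
    DecidableInOracle O fun n => ¬p n := by
  obtain ⟨q, hq, hqp⟩ := hp
  refine ⟨(fun k => 1 - k) ∘ q,
    .comp_total (.of_computable (Primrec.nat_sub.comp (Primrec.const 1) Primrec.id).to_comp) hq,
    fun n => ?_⟩
  simp only [Function.comp_apply, ← hqp]
  omega

protected theorem and {p p' : ℕ → Prop} (hp : DecidableInOracle O p)
    (hp' : DecidableInOracle O p') : DecidableInOracle O fun n => p n ∧ p' n := by
  obtain ⟨q, hq, hqp⟩ := hp
  obtain ⟨q', hq', hqp'⟩ := hp'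
  have hadd : Computable fun w : ℕ => w.unpair.1 + w.unpair.2 :=
    (Primrec.nat_add.comp (Primrec.fst.comp Primrec.unpair)
      (Primrec.snd.comp Primrec.unpair)).to_comp
  refine ⟨(fun w => w.unpair.1 + w.unpair.2) ∘ fun n => Nat.pair (q n) (q' n),
    .comp_total (.of_computable hadd) (.pair_total hq hq'), fun n => ?_⟩
  simp only [Function.comp_apply, Nat.unpair_pair, ← hqp, ← hqp']
  omega

theorem exists_search {R : ℕ → ℕ → Prop}
    (hR : DecidableInOracle O fun w => R w.unpair.1 w.unpair.2) :
    ∃ step : ℕ →. ℕ, RecursiveInOracle O step ∧ ∀ x, (∃ y, R x y) → ∃ y ∈ step x, R x y := by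
  obtain ⟨q, hq, hqR⟩ := hR
  refine ⟨_, hq.rfind, fun x ⟨y, hy⟩ => ?_⟩
  have hdom : (Nat.rfind fun n => (fun m => decide (m = 0)) <$> (q (Nat.pair x n) : Part ℕ)).Dom :=
    Nat.rfind_dom.2 ⟨y, by simpa [hqR] using hy, fun _ => trivial⟩
  refine ⟨_, Part.get_mem hdom, ?_⟩
  simpa [hqR] using Nat.rfind_spec (Part.get_mem hdom)

theorem exists_chain {R : ℕ → ℕ → Prop}
    (hR : DecidableInOracle O fun w => R w.unpair.1 w.unpair.2) {P : ℕ → Prop} {m : ℕ}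
    (hm : P m) (hex : ∀ x, P x → ∃ y, R x y) (hP : ∀ x y, P x → R x y → P y) :
    ∃ a : ℕ → ℕ, RecursiveInOracle O ↑a ∧ ∀ n, R (a n) (a (n + 1)) := by
  obtain ⟨step, hstep, hsearch⟩ := hR.exists_search
  refine hstep.exists_orbit hm fun x hx => ?_
  obtain ⟨y, hy, hxy⟩ := hsearch x (hex x hx)
  exact ⟨y, hy, hxy, hP x y hx hxy⟩

end DecidableInOracle

theorem ComputablePred.rePred_exists {p : ℕ → ℕ → Prop}
    (hp : ComputablePred fun x : ℕ × ℕ => p x.1 x.2) : REPred fun n => ∃ z, p n z := by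
  obtain ⟨f, hf, hpf⟩ := ComputablePred.computable_iff.1 hp
  refine (Partrec.rfind (p := fun n z => Part.some (f (n, z))) hf.partrec).dom_re.of_eq
    fun n => ?_
  refine Nat.rfind_dom.trans ?_
  simp [fun z => congrFun hpf (n, z)]

def RelCovBy {α : Type*} (r : α → α → Prop) (x y : α) : Prop :=
  r x y ∧ ¬∃ z, r x z ∧ r z y

section Covers

variable {α : Type*} {r : α → α → Prop}

theorem finite_setOf_not_rel_of_forall_not_rel (htotal : ∀ a b, a ≠ b → r a b ∨ r b a) {m : α}
    (hm : ∀ y, ¬r y m) : {z | ¬r m z}.Finite :=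
  (Set.finite_singleton m).subset fun z hz =>
    by_contra fun hzm => (htotal z m hzm).elim (hm z) hz

theorem RelCovBy.finite_setOf_not_rel (htotal : ∀ a b, a ≠ b → r a b ∨ r b a) {x y : α}
    (hxy : RelCovBy r x y) (hx : {z | ¬r x z}.Finite) : {z | ¬r y z}.Finite := by
  refine (hx.insert y).subset fun z hz => ?_
  by_cases hzy : z = y
  · exact .inl hzy
  · refine .inr fun hxz => ?_
    exact (htotal z y hzy).elim (fun hzy' => hxy.2 ⟨z, hxz, hzy'⟩) hz

theorem exists_rel_of_finite_setOf_not_rel [Infinite α] {x : α} (hx : {z | ¬r x z}.Finite) :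
    ∃ y, r x y := by
  by_contra! h
  exact Set.infinite_univ (hx.subset fun z _ => h z)

end Covers

theorem Computable₂.computablePred_comp {α β γ : Type*} [Primcodable α] [Primcodable β]
    [Primcodable γ] {r : β → γ → Bool} (hr : Computable₂ r) {f : α → β} {g : α → γ}
    (hf : Computable f) (hg : Computable g) : ComputablePred fun x => r (f x) (g x) :=
  ComputablePred.computable_iff.2 ⟨_, hr.comp hf hg, rfl⟩

section ComputableRelation

variable {lt : ℕ → ℕ → Bool}

theorem exists_computable_descending_of_forall_exists_lt (hcomp : Computable₂ lt)
    (h : ∀ x, ∃ y, lt y x) : ∃ a : ℕ → ℕ, Computable a ∧ ∀ n, lt (a (n + 1)) (a n) := by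
  have hR : ComputablePred fun w : ℕ => lt w.unpair.2 w.unpair.1 :=
    hcomp.computablePred_comp (Computable.snd.comp .unpair)
      (Computable.fst.comp .unpair)
  obtain ⟨a, ha, hdesc⟩ := (hR.decidableInOracle fun _ => 0).exists_chain
    (R := fun x y => lt y x) (P := fun _ => True) (m := 0) trivial (fun x _ => h x)
    fun _ _ _ _ => trivial
  exact ⟨a, ha.computable_of_zero, hdesc⟩

theorem exists_computable_descending_of_forall_not_relCovBy (hcomp : Computable₂ lt) {x₀ y₀ : ℕ}
    (hy₀ : lt x₀ y₀) (hx₀ : ∀ y, ¬RelCovBy (fun a b => lt a b) x₀ y) :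
    ∃ a : ℕ → ℕ, Computable a ∧ ∀ n, lt (a (n + 1)) (a n) := by
  have hR₁ : ComputablePred fun w : ℕ => lt x₀ w.unpair.2 :=
    hcomp.computablePred_comp (Computable.const x₀)
      (Computable.snd.comp .unpair)
  have hR₂ : ComputablePred fun w : ℕ => lt w.unpair.2 w.unpair.1 :=
    hcomp.computablePred_comp (Computable.snd.comp .unpair)
      (Computable.fst.comp .unpair)
  have hex : ∀ x, lt x₀ x → ∃ y, lt x₀ y ∧ lt y x := fun x hx => by
    simpa [RelCovBy, hx] using hx₀ x
  obtain ⟨a, ha, hdesc⟩ := ((hR₁.decidableInOracle fun _ => 0).and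
    (hR₂.decidableInOracle fun _ => 0)).exists_chain
    (R := fun x y => lt x₀ y ∧ lt y x) (P := fun x => lt x₀ x) hy₀ hex fun _ _ _ h => h.1
  exact ⟨a, ha.computable_of_zero, fun n => (hdesc n).2⟩

theorem exists_jump_ascending_of_forall_not_lt_of_exists_relCovBy (hcomp : Computable₂ lt)
    (htotal : ∀ a b, a ≠ b → lt a b ∨ lt b a) {m : ℕ} (hm : ∀ y, ¬lt y m)
    (hcov : ∀ x, (∃ y, lt x y) → ∃ y, RelCovBy (fun a b => lt a b) x y) :
    ∃ a : ℕ → ℕ, RecursiveInOracle jump ↑a ∧ ∀ n, lt (a n) (a (n + 1)) := by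
  have hR₁ : ComputablePred fun w : ℕ => lt w.unpair.1 w.unpair.2 :=
    hcomp.computablePred_comp (Computable.fst.comp .unpair)
      (Computable.snd.comp .unpair)
  have hR₂ : ComputablePred fun x : ℕ × ℕ => lt x.1.unpair.1 x.2 ∧ lt x.2 x.1.unpair.2 :=
    (ComputablePred.computable_iff.2 ⟨_, (Primrec.and.to_comp.comp
      (hcomp.comp ((Computable.fst.comp .unpair).comp .fst) .snd)
      (hcomp.comp .snd ((Computable.snd.comp .unpair).comp .fst))), rfl⟩).of_eq fun _ => by simp
  obtain ⟨a, ha, hasc⟩ := (hR₁.decidableInOracle jump).and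
    hR₂.rePred_exists.decidableInOracle_jump.not |>.exists_chain
    (R := RelCovBy fun a b => lt a b) (P := fun x => {z | ¬lt x z}.Finite)
    (finite_setOf_not_rel_of_forall_not_rel htotal hm)
    (fun x hx => hcov x (exists_rel_of_finite_setOf_not_rel (r := fun a b => lt a b) hx))
    fun _ _ hx hxy => hxy.finite_setOf_not_rel htotal hx
  exact ⟨a, ha, fun n => (hasc n).1⟩

end ComputableRelation

theorem computable_descending_or_jump_ascending_general (lt : ℕ → ℕ → Bool)
    (hcomp : Computable₂ fun a b => lt a b)
    (htotal : ∀ a b, a ≠ b → lt a b = true ∨ lt b a = true) :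
    (∃ a : ℕ → ℕ, Computable a ∧ ∀ n, lt (a (n + 1)) (a n) = true) ∨
      (∃ a : ℕ → ℕ, RecursiveInOracle jump ↑a ∧ ∀ n, lt (a n) (a (n + 1)) = true) := by
  by_cases hmin : ∃ m, ∀ y, ¬lt y m
  · obtain ⟨m, hm⟩ := hmin
    by_cases hcov : ∀ x, (∃ y, lt x y) → ∃ y, RelCovBy (fun a b => lt a b) x y
    · exact .inr
        (exists_jump_ascending_of_forall_not_lt_of_exists_relCovBy hcomp htotal hm hcov)
    · push Not at hcov
      obtain ⟨x₀, ⟨y₀, hy₀⟩, hx₀⟩ := hcov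
      exact .inl (exists_computable_descending_of_forall_not_relCovBy hcomp hy₀ hx₀)
  · push Not at hmin
    exact .inl (exists_computable_descending_of_forall_exists_lt hcomp hmin)

/-- if `L` is an infinite computable linear order (here: a computable
strict linear order `lt` on all of ω), then either `L` has a computable infinite
descending sequence, or `L` has a `0'`-computable infinite ascending sequence. -/
theorem computable_descending_or_jump_ascending (lt : ℕ → ℕ → Bool)
    (hcomp : Computable₂ fun a b => lt a b)
    (hirr : ∀ a, lt a a = false)
    (htrans : ∀ a b c, lt a b = true → lt b c = true → lt a c = true)
    (htotal : ∀ a b, a ≠ b → lt a b = true ∨ lt b a = true) :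
    (∃ a : ℕ → ℕ, Computable a ∧ ∀ n, lt (a (n + 1)) (a n) = true) ∨
      (∃ a : ℕ → ℕ, RecursiveInOracle jump ↑a ∧ ∀ n, lt (a n) (a (n + 1)) = true) :=
  computable_descending_or_jump_ascending_general lt hcomp htotal
end

section
/- Let L be a computable linear order on ω and let f : ω → ω be an infinite descending sequence in L (viewing elements of L as natural numbers). Then any g : ω → ω majorizing f computes (uniformly) an infinite descending sequence in L: define a₀ to be the L-rightmost of the first g(0) natural numbers, and a_{n+1} the L-rightmost among the first g(n+1) natural numbers that lie L-below a_n; then (a_n) is a well-defined infinite descending sequence in L. -/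
theorem exists_lt_max (lt : ℕ → ℕ → Bool)
    (htrans : ∀ a b c, lt a b = true → lt b c = true → lt a c = true)
    (htotal : ∀ a b, a ≠ b → lt a b = true ∨ lt b a = true)
    (s : Finset ℕ) :
    s.Nonempty → ∃ m ∈ s, ∀ x ∈ s, x = m ∨ lt x m = true := by
  classical
  induction s using Finset.induction_on with
  | empty => exact fun hs => absurd hs (by simp)
  | @insert a s ha ih =>
    intro _
    rcases s.eq_empty_or_nonempty with rfl | hne
    · exact ⟨a, by simp, by simp⟩
    · obtain ⟨m, hm, hmax⟩ := ih hne
      by_cases hae : a = m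
      · exact ⟨m, Finset.mem_insert_of_mem hm, by
          intro x hx
          rcases Finset.mem_insert.mp hx with rfl | hx
          · exact Or.inl hae
          · exact hmax x hx⟩
      · rcases htotal a m hae with h | h
        · exact ⟨m, Finset.mem_insert_of_mem hm, by
            intro x hx
            rcases Finset.mem_insert.mp hx with rfl | hx
            · exact Or.inr h
            · exact hmax x hx⟩
        · refine ⟨a, Finset.mem_insert_self a s, ?_⟩
          intro x hx
          rcases Finset.mem_insert.mp hx with rfl | hx
          · exact Or.inl rfl
          · rcases hmax x hx with rfl | hxm
            · exact Or.inr h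
            · exact Or.inr (htrans x m a hxm h)

/-- let `lt` be a (computable) strict linear order on ω and let `f` be an
infinite descending sequence in it.  Then for any `g` majorizing `f`, the sequence
defined by: `a 0` = the `lt`-greatest among the numbers `≤ g 0`, and `a (n+1)` = the
`lt`-greatest among the numbers `≤ g (n+1)` lying `lt`-below `a n`, is well defined
(the required maxima exist) and is an infinite descending sequence in the order.
(The construction is manifestly uniformly computable from `g`.) -/
theorem majorizing_computes_descending (lt : ℕ → ℕ → Bool)
    (hirr : ∀ a, lt a a = false)
    (htrans : ∀ a b c, lt a b = true → lt b c = true → lt a c = true)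
    (htotal : ∀ a b, a ≠ b → lt a b = true ∨ lt b a = true)
    (f : ℕ → ℕ) (hf : ∀ n, lt (f (n + 1)) (f n) = true)
    (g : ℕ → ℕ) (hg : ∀ x, f x ≤ g x) :
    ∃ a : ℕ → ℕ,
      (a 0 ≤ g 0 ∧ ∀ x ≤ g 0, x = a 0 ∨ lt x (a 0) = true) ∧
      (∀ n, a (n + 1) ≤ g (n + 1) ∧ lt (a (n + 1)) (a n) = true ∧
        ∀ x ≤ g (n + 1), lt x (a n) = true → x = a (n + 1) ∨ lt x (a (n + 1)) = true) := by
  classical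
  -- base existence
  have hbase : ∃ m, m ≤ g 0 ∧ ∀ x ≤ g 0, x = m ∨ lt x m = true := by
    obtain ⟨m, hm, hmax⟩ := exists_lt_max lt htrans htotal (Finset.range (g 0 + 1))
      ⟨0, Finset.mem_range.mpr (Nat.succ_pos _)⟩
    exact ⟨m, Finset.mem_range_succ_iff.mp hm,
      fun x hx => hmax x (Finset.mem_range_succ_iff.mpr hx)⟩
  -- step existence
  have hstep : ∀ (n p : ℕ), (f n = p ∨ lt (f n) p = true) →
      ∃ m, m ≤ g (n + 1) ∧ lt m p = true ∧
        ∀ x ≤ g (n + 1), lt x p = true → x = m ∨ lt x m = true := by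
    intro n p hp
    have hfp : lt (f (n + 1)) p = true := by
      rcases hp with rfl | hp
      · exact hf n
      · exact htrans _ _ _ (hf n) hp
    obtain ⟨m, hm, hmax⟩ := exists_lt_max lt htrans htotal
      ((Finset.range (g (n + 1) + 1)).filter (fun x => lt x p = true))
      ⟨f (n + 1), by
        simp only [Finset.mem_filter, Finset.mem_range_succ_iff]
        exact ⟨hg (n + 1), hfp⟩⟩
    simp only [Finset.mem_filter, Finset.mem_range_succ_iff] at hm
    refine ⟨m, hm.1, hm.2, fun x hx hxp => hmax x ?_⟩
    simp only [Finset.mem_filter, Finset.mem_range_succ_iff]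
    exact ⟨hx, hxp⟩
  -- the invariant type
  let P : ℕ → Type := fun n => {v : ℕ // f n = v ∨ lt (f n) v = true}
  have hb : f 0 = Classical.choose hbase ∨ lt (f 0) (Classical.choose hbase) = true :=
    (Classical.choose_spec hbase).2 (f 0) (hg 0)
  let F : ∀ n, P n := fun n => Nat.rec (⟨Classical.choose hbase, hb⟩ : P 0)
    (fun n p => ⟨Classical.choose (hstep n p.1 p.2), by
      have hs := Classical.choose_spec (hstep n p.1 p.2)
      have hfp : lt (f (n + 1)) p.1 = true := by
        rcases p.2 with h | h
        · exact h ▸ hf n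
        · exact htrans _ _ _ (hf n) h
      exact hs.2.2 (f (n + 1)) (hg (n + 1)) hfp⟩) n
  refine ⟨fun n => (F n).1, ⟨(Classical.choose_spec hbase).1, (Classical.choose_spec hbase).2⟩,
    fun n => ?_⟩
  have : F (n + 1) = ⟨Classical.choose (hstep n (F n).1 (F n).2), _⟩ := rfl
  have hs := Classical.choose_spec (hstep n (F n).1 (F n).2)
  exact ⟨hs.1, hs.2.1, hs.2.2⟩
end

section
/- Let T be a Laver tree with stem τ and let A ⊆ T be upwards closed in T. Then an (A, ω₁ ∪ {∞}, T) Laver ranking exists: there is a function r from {σ ∈ T : τ ⊆ σ} to ω₁ ∪ {∞} with r(σ) = 0 iff σ ∈ A, and for σ ∉ A, r(σ) = liminf over children σ⌢n ∈ T of r(σ⌢n)+1. -/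
/-- A tree on ω: a set of finite strings closed under initial segments. -/
def IsTree (T : Set (List ℕ)) : Prop := ∀ σ ∈ T, ∀ ρ : List ℕ, ρ <+: σ → ρ ∈ T

/-- A Laver tree with stem `τ`: a tree containing `τ`, all of whose elements are
comparable with `τ`, and in which every node extending `τ` has infinitely many
immediate children. -/
def IsLaverTree (T : Set (List ℕ)) (τ : List ℕ) : Prop :=
  IsTree T ∧ τ ∈ T ∧ (∀ σ ∈ T, τ <+: σ ∨ σ <+: τ) ∧
    ∀ σ ∈ T, τ <+: σ → {n : ℕ | σ ++ [n] ∈ T}.Infinite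

/-- `A` is upwards closed in the tree `T`. -/
def UpClosed (T A : Set (List ℕ)) : Prop :=
  ∀ σ ∈ A, ∀ ρ ∈ T, σ <+: ρ → ρ ∈ A

/-- The successor function on ω₁ ∪ {∞} (with ∞ + 1 = ∞), modelled on `WithTop Ordinal`. -/
def osucc : WithTop Ordinal → WithTop Ordinal := WithTop.map (· + 1)

/-- An `(A, ω₁ ∪ {∞}, T)` Laver ranking (for a Laver tree `T` with stem `τ`):
`r σ = 0` iff `σ ∈ A`, and for `σ ∉ A`, `r σ` is the liminf over the children
`σ⌢n ∈ T` of `r (σ⌢n) + 1`, i.e. the least `x` such that infinitely many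
children satisfy `r (σ⌢n) + 1 ≤ x`. -/
def IsLaverRanking (T A : Set (List ℕ)) (τ : List ℕ)
    (r : List ℕ → WithTop Ordinal) : Prop :=
  ∀ σ ∈ T, τ <+: σ →
    ((r σ = 0 ↔ σ ∈ A) ∧
      (σ ∉ A → IsLeast {x : WithTop Ordinal |
        {n : ℕ | σ ++ [n] ∈ T ∧ osucc (r (σ ++ [n])) ≤ x}.Infinite} (r σ)))

/-! The rank is built from below: `σ` has rank at most `α` if `σ ∈ A`, or if infinitely many
children have rank at most some `β < α`. These conditions grow with `α`, so the rank of `σ` is the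
least `α` satisfying them, or `∞` if there is none. Since `r(σ⌢n) + 1 ≤ δ` iff `r(σ⌢n) ≤ β` for
some `β < δ`, the liminf equation at ordinal values is the recursion itself; at the value `∞` it
holds because a Laver tree gives every node above the stem infinitely many children. -/

universe u

theorem WithTop.sInf_image_coe_le_coe_iff {α : Type*} [ConditionallyCompleteLinearOrderBot α]
    [WellFoundedLT α] {P : α → Prop} (hP : Monotone P) (β : α) :
    sInf (((↑) : α → WithTop α) '' {a | P a}) ≤ β ↔ P β := by
  refine ⟨fun h => ?_, fun h => sInf_le ⟨β, h, rfl⟩⟩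
  obtain hempty | hne := Set.eq_empty_or_nonempty {a | P a}
  · simp [hempty] at h
  · rw [← WithTop.coe_sInf' hne (OrderBot.bddBelow _), WithTop.coe_le_coe] at h
    exact hP h (csInf_mem hne)

theorem osucc_le_coe_iff {x : WithTop Ordinal.{u}} {δ : Ordinal.{u}} :
    osucc x ≤ δ ↔ ∃ γ < δ, x ≤ γ := by
  induction x using WithTop.recTopCoe with
  | top => simp [osucc]
  | coe γ =>
    simp only [osucc, WithTop.map_coe, WithTop.coe_le_coe, Order.add_one_le_iff]
    exact ⟨fun h => ⟨γ, h, le_rfl⟩, fun ⟨γ', hγ', hle⟩ => hle.trans_lt hγ'⟩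

namespace Laver

variable (T A : Set (List ℕ))

def RankLE : Ordinal.{u} → List ℕ → Prop :=
  Ordinal.lt_wf.fix fun α IH σ =>
    σ ∈ A ∨ {n : ℕ | σ ++ [n] ∈ T ∧ ∃ β, ∃ h : β < α, IH β h (σ ++ [n])}.Infinite

theorem rankLE_iff (α : Ordinal.{u}) (σ : List ℕ) :
    RankLE T A α σ ↔
      σ ∈ A ∨ {n : ℕ | σ ++ [n] ∈ T ∧ ∃ β < α, RankLE T A β (σ ++ [n])}.Infinite := by
  rw [RankLE, WellFounded.fix_eq]
  simp only [exists_prop]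

variable {T A}

theorem rankLE_mono (σ : List ℕ) : Monotone fun α : Ordinal.{u} => RankLE T A α σ := by
  intro α α' hαα' h
  rw [rankLE_iff] at h ⊢
  refine h.imp_right (Set.Infinite.mono ?_)
  rintro n ⟨hn, β, hβ, hrank⟩
  exact ⟨hn, β, hβ.trans_le hαα', hrank⟩

theorem rankLE_zero_iff (σ : List ℕ) : RankLE.{u} T A 0 σ ↔ σ ∈ A := by
  rw [rankLE_iff]
  simp

variable (T A) in
noncomputable def rank (σ : List ℕ) : WithTop Ordinal.{u} :=
  sInf ((↑) '' {α | RankLE T A α σ})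

theorem rank_le_coe_iff (σ : List ℕ) (α : Ordinal.{u}) :
    rank T A σ ≤ α ↔ RankLE T A α σ :=
  WithTop.sInf_image_coe_le_coe_iff (rankLE_mono σ) α

theorem rank_eq_zero_iff (σ : List ℕ) : rank.{u} T A σ = 0 ↔ σ ∈ A := by
  rw [← rankLE_zero_iff, ← rank_le_coe_iff]
  exact le_bot_iff.symm

theorem rank_le_coe_iff_infinite {σ : List ℕ} (hσ : σ ∉ A) (δ : Ordinal.{u}) :
    rank T A σ ≤ δ ↔ {n : ℕ | σ ++ [n] ∈ T ∧ osucc (rank T A (σ ++ [n])) ≤ δ}.Infinite := by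
  simp only [rank_le_coe_iff, osucc_le_coe_iff]
  rw [rankLE_iff, or_iff_right hσ]

theorem isLeast_rank {σ : List ℕ} (hσ : σ ∉ A) (hchildren : {n : ℕ | σ ++ [n] ∈ T}.Infinite) :
    IsLeast {x : WithTop Ordinal.{u} |
      {n : ℕ | σ ++ [n] ∈ T ∧ osucc (rank T A (σ ++ [n])) ≤ x}.Infinite} (rank T A σ) := by
  constructor
  · induction h : rank T A σ using WithTop.recTopCoe with
    | top => simpa using hchildren
    | coe δ => exact (rank_le_coe_iff_infinite hσ δ).mp h.le
  · intro x hx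
    induction x using WithTop.recTopCoe with
    | top => exact le_top
    | coe δ => exact (rank_le_coe_iff_infinite hσ δ).mpr hx

end Laver

theorem laverRanking_exists_general (T A : Set (List ℕ)) (τ : List ℕ)
    (hT : IsLaverTree T τ) :
    ∃ r : List ℕ → WithTop Ordinal, IsLaverRanking T A τ r :=
  ⟨Laver.rank T A, fun σ hσ hτσ =>
    ⟨Laver.rank_eq_zero_iff σ, fun hσA => Laver.isLeast_rank hσA (hT.2.2.2 σ hσ hτσ)⟩⟩

/-- for any Laver tree `T` with stem `τ` and any `A ⊆ T` upwards
closed in `T`, an `(A, ω₁ ∪ {∞}, T)` Laver ranking exists. -/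
theorem laverRanking_exists (T A : Set (List ℕ)) (τ : List ℕ)
    (hT : IsLaverTree T τ) (hAT : A ⊆ T) (hA : UpClosed T A) :
    ∃ r : List ℕ → WithTop Ordinal, IsLaverRanking T A τ r :=
  laverRanking_exists_general T A τ hT
end

section
/- Let r be an (A, L, T) Laver ranking where L is a linear order with least element 0, greatest element ∞, and a successor function, and let r̃ denote the canonical ordinal-valued Laver ranking. Then there is no node σ with r(σ) in the well-founded part of L and r(σ) < r̃(σ) (identifying the well-founded initial segment of L with ordinals). -/
/-- An `(A, L, T)` Laver ranking into a linear order `L` with least element `bot`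
and successor function `succ`: `r σ = bot` iff `σ ∈ A`, and for `σ ∉ A`, `r σ` is
the `L`-least `x` such that infinitely many children `σ⌢n ∈ T` have
`succ (r (σ⌢n)) ≤ x`. -/
def IsGenLaverRanking {L : Type*} [LinearOrder L] (bot : L) (succ : L → L)
    (T A : Set (List ℕ)) (τ : List ℕ) (r : List ℕ → L) : Prop :=
  ∀ σ ∈ T, τ <+: σ →
    ((r σ = bot ↔ σ ∈ A) ∧
      (σ ∉ A → IsLeast {x : L |
        {n : ℕ | σ ++ [n] ∈ T ∧ succ (r (σ ++ [n])) ≤ x}.Infinite} (r σ)))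

/-! Strong induction on the order type `α` of `Iio (r σ)` shows `rt σ ≤ α`. A child counted in
the liminf defining `r σ` has `succ (r child) ≤ r σ`, so `r child < r σ` and `Iio (r child)` has
order type some `β < α`; by induction `rt child ≤ β`. Thus infinitely many children satisfy
`rt child + 1 ≤ α`, and minimality of `rt σ` in its own liminf gives `rt σ ≤ α`. -/

def OrderIso.restrictIio {α β : Type*} [Preorder α] [Preorder β] (e : α ≃o β) (x : α) :
    Set.Iio x ≃o Set.Iio (e x) where
  toEquiv := e.toEquiv.subtypeEquiv fun _ => e.lt_iff_lt.symm
  map_rel_iff' := e.le_iff_le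

def Set.Iio.orderIsoIioCoe {α : Type*} [Preorder α] {a : α} (c : Set.Iio a) :
    Set.Iio c ≃o Set.Iio (c : α) where
  toEquiv := Equiv.subtypeSubtypeEquivSubtype (q := (· < (c : α))) fun h => h.trans c.2
  map_rel_iff' := Iff.rfl

theorem exists_lt_nonempty_orderIso_Iio {L : Type*} [Preorder L] {a b : L} (hba : b < a)
    {α : Ordinal} (e : Set.Iio a ≃o Set.Iio α) :
    ∃ β < α, Nonempty (Set.Iio b ≃o Set.Iio β) :=
  ⟨e ⟨b, hba⟩, (e ⟨b, hba⟩).2, ⟨(Set.Iio.orderIsoIioCoe ⟨b, hba⟩).symm.trans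
    ((e.restrictIio _).trans (Set.Iio.orderIsoIioCoe _))⟩⟩

theorem osucc_le_coe_of_le_of_lt {x : WithTop Ordinal} {β α : Ordinal} (hx : x ≤ β)
    (hβ : β < α) : osucc x ≤ α := by
  obtain ⟨γ, rfl, hγ⟩ := WithTop.le_coe_iff.mp hx
  exact WithTop.coe_le_coe.mpr (Order.add_one_le_iff.mpr (hγ.trans_lt hβ))

section LaverRanking

variable {L : Type*} [LinearOrder L] {bot top : L} {succ : L → L}

theorem lt_of_succ_le_of_ne_top (htop : ∀ x, x ≤ top) (hstop : succ top = top)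
    (hsucc_lt : ∀ x, x ≠ top → x < succ x) {x y : L} (hle : succ y ≤ x) (hx : x ≠ top) :
    y < x := by
  by_cases hy : y = top
  · subst hy
    exact absurd (le_antisymm (htop x) (hstop ▸ hle)) hx
  · exact (hsucc_lt y hy).trans_le hle

theorem IsLaverRanking.le_of_isGenLaverRanking (htop : ∀ x, x ≤ top) (hstop : succ top = top)
    (hsucc_lt : ∀ x, x ≠ top → x < succ x) {T A : Set (List ℕ)} {τ : List ℕ}
    {r : List ℕ → L} (hr : IsGenLaverRanking bot succ T A τ r)
    {rt : List ℕ → WithTop Ordinal} (hrt : IsLaverRanking T A τ rt) (α : Ordinal) :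
    ∀ σ ∈ T, τ <+: σ → r σ ≠ top → Nonempty (Set.Iio (r σ) ≃o Set.Iio α) → rt σ ≤ α := by
  induction α using WellFoundedLT.induction with
  | _ α ih =>
    rintro σ hσ hτσ hne ⟨e⟩
    by_cases hσA : σ ∈ A
    · rw [(hrt σ hσ hτσ).1.mpr hσA]
      exact WithTop.coe_le_coe.mpr zero_le
    refine ((hrt σ hσ hτσ).2 hσA).2 (((hr σ hσ hτσ).2 hσA).1.mono ?_)
    rintro n ⟨hn, hle⟩
    have hlt := lt_of_succ_le_of_ne_top htop hstop hsucc_lt hle hne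
    obtain ⟨β, hβ, hiso⟩ := exists_lt_nonempty_orderIso_Iio hlt e
    have hchild := ih β hβ _ hn (hτσ.trans (List.prefix_append σ [n]))
      (hlt.trans_le (htop _)).ne hiso
    exact ⟨hn, osucc_le_coe_of_le_of_lt hchild hβ⟩

end LaverRanking

theorem no_ranking_smaller_than_canonical_general {L : Type*} [LinearOrder L]
    (bot top : L) (succ : L → L)
    (htop : ∀ x, x ≤ top) (hstop : succ top = top)
    (hsucc_lt : ∀ x, x ≠ top → x < succ x)
    (T A : Set (List ℕ)) (τ : List ℕ)
    (r : List ℕ → L) (hr : IsGenLaverRanking bot succ T A τ r)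
    (rt : List ℕ → WithTop Ordinal) (hrt : IsLaverRanking T A τ rt) :
    ¬ ∃ σ ∈ T, τ <+: σ ∧ r σ ≠ top ∧ ∃ α : Ordinal,
        Nonempty (Set.Iio (r σ) ≃o Set.Iio α) ∧ (α : WithTop Ordinal) < rt σ := by
  rintro ⟨σ, hσ, hτσ, hne, α, hiso, hα⟩
  exact (IsLaverRanking.le_of_isGenLaverRanking htop hstop hsucc_lt hr hrt α σ hσ hτσ hne
    hiso).not_gt hα

/-- let `r` be an `(A, L, T)` Laver ranking, where `L` is a linear
order with least element `bot`, greatest element `top` (= ∞) and a successor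
function `succ` (with `succ top = top`), and let `rt` be the canonical
ordinal-valued Laver ranking.  Then there is no node `σ` with `r σ` in the
well-founded part `W(L)` of `L` whose ordinal rank (the order type `α` of the
elements below `r σ`) is strictly less than `rt σ`. -/
theorem no_ranking_smaller_than_canonical {L : Type*} [LinearOrder L]
    (bot top : L) (succ : L → L)
    (hbot : ∀ x, bot ≤ x) (htop : ∀ x, x ≤ top) (hstop : succ top = top)
    (hsucc_lt : ∀ x, x ≠ top → x < succ x)
    (hsucc_le : ∀ x y, x < succ y → x ≤ y)
    (T A : Set (List ℕ)) (τ : List ℕ)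
    (hT : IsLaverTree T τ) (hAT : A ⊆ T) (hA : UpClosed T A)
    (r : List ℕ → L) (hr : IsGenLaverRanking bot succ T A τ r)
    (rt : List ℕ → WithTop Ordinal) (hrt : IsLaverRanking T A τ rt) :
    ¬ ∃ σ ∈ T, τ <+: σ ∧ r σ ≠ top ∧ ∃ α : Ordinal,
        Nonempty (Set.Iio (r σ) ≃o Set.Iio α) ∧ (α : WithTop Ordinal) < rt σ :=
  no_ranking_smaller_than_canonical_general bot top succ htop hstop hsucc_lt T A τ r hr rt hrt
end

section
/- Let T be a Laver tree with stem τ, A ⊆ T upwards closed, and suppose the canonical Laver ranking satisfies r_{A,T}(τ) < ∞. Then T_A is a Laver tree with stem τ, and every infinite path through T_A meets A (i.e., A ∩ T_A covers T_A). -/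
/-- The derived tree `T_A`, defined recursively: all initial segments of the stem
`τ` are in; a child `σ⌢n ∈ T` of `σ ∈ T_A` (with `σ ⊇ τ`) is in when
`r (σ⌢n) < r σ < ∞` (with `σ ∉ A`), or when `σ ∈ A` (all children), or when
`r (σ⌢n) = r σ = ∞` (with `σ ∉ A`). -/
inductive InDerived (T A : Set (List ℕ)) (τ : List ℕ)
    (r : List ℕ → WithTop Ordinal) : List ℕ → Prop
  | stem (σ : List ℕ) : σ <+: τ → InDerived T A τ r σ
  | dec (σ : List ℕ) (n : ℕ) : InDerived T A τ r σ → τ <+: σ → σ ∉ A →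
      σ ++ [n] ∈ T → r (σ ++ [n]) < r σ → r σ ≠ ⊤ → InDerived T A τ r (σ ++ [n])
  | mem (σ : List ℕ) (n : ℕ) : InDerived T A τ r σ → τ <+: σ → σ ∈ A →
      σ ++ [n] ∈ T → InDerived T A τ r (σ ++ [n])
  | inf (σ : List ℕ) (n : ℕ) : InDerived T A τ r σ → τ <+: σ → σ ∉ A →
      σ ++ [n] ∈ T → r (σ ++ [n]) = ⊤ → r σ = ⊤ → InDerived T A τ r (σ ++ [n])

/-- The initial segment of length `n` of `f`, as a finite string. -/
def initSeg (f : ℕ → ℕ) (n : ℕ) : List ℕ := List.ofFn fun i : Fin n => f i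


/-!
Every node of `T_A` extending `τ` has finite rank: the stem has finite rank, ranks of nodes added by
the rule `r (σ⌢n) < r σ` are finite, and nodes in `A` have rank `0`. So the branching rule
`r (σ⌢n) = r σ = ∞` is never used, and as long as a path avoids `A` its ranks strictly decrease,
which well-foundedness of the ordinals forbids forever. For a finite rank `r σ`, `r (σ⌢n) + 1 ≤ r σ`
means `r (σ⌢n) < r σ`, so the liminf definition of `r σ` provides infinitely many children in `T_A`.
-/

lemma osucc_le_iff {a b : WithTop Ordinal} (hb : b ≠ ⊤) : osucc a ≤ b ↔ a < b := by
  cases a with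
  | top => simp [osucc, hb]
  | coe a =>
    lift b to Ordinal using hb
    exact WithTop.coe_le_coe.trans (Order.add_one_le_iff.trans WithTop.coe_lt_coe.symm)

lemma initSeg_succ (g : ℕ → ℕ) (n : ℕ) : initSeg g (n + 1) = initSeg g n ++ [g n] := by
  simp only [initSeg, List.ofFn_succ_last, Fin.val_castSucc, Fin.val_last]

@[simp]
lemma initSeg_length (g : ℕ → ℕ) (n : ℕ) : (initSeg g n).length = n := by
  simp [initSeg]

namespace InDerived

variable {T A : Set (List ℕ)} {τ : List ℕ} {r : List ℕ → WithTop Ordinal}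

lemma mem_tree (hT : IsTree T) (hτT : τ ∈ T) {σ : List ℕ} (h : InDerived T A τ r σ) :
    σ ∈ T := by
  cases h with
  | stem _ h => exact hT τ hτT σ h
  | dec _ _ _ _ _ h | mem _ _ _ _ _ h | inf _ _ _ _ _ h => exact h

lemma comparable {σ : List ℕ} (h : InDerived T A τ r σ) : τ <+: σ ∨ σ <+: τ := by
  cases h with
  | stem _ h => exact Or.inr h
  | dec σ n _ h | mem σ n _ h | inf σ n _ h => exact Or.inl (h.trans (List.prefix_append σ [n]))

lemma stem_prefix {σ : List ℕ} (h : InDerived T A τ r σ) (hlen : τ.length ≤ σ.length) :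
    τ <+: σ :=
  h.comparable.elim id fun hστ => (hστ.eq_of_length_le hlen).symm ▸ List.prefix_refl σ

lemma of_prefix {σ ρ : List ℕ} (h : InDerived T A τ r σ) (hρσ : ρ <+: σ) :
    InDerived T A τ r ρ := by
  induction h generalizing ρ with
  | stem σ h => exact .stem ρ (hρσ.trans h)
  | dec σ n h₁ h₂ h₃ h₄ h₅ h₆ ih =>
    exact (List.prefix_concat_iff.mp hρσ).elim (· ▸ .dec σ n h₁ h₂ h₃ h₄ h₅ h₆) ih
  | mem σ n h₁ h₂ h₃ h₄ ih =>
    exact (List.prefix_concat_iff.mp hρσ).elim (· ▸ .mem σ n h₁ h₂ h₃ h₄) ih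
  | inf σ n h₁ h₂ h₃ h₄ h₅ h₆ ih =>
    exact (List.prefix_concat_iff.mp hρσ).elim (· ▸ .inf σ n h₁ h₂ h₃ h₄ h₅ h₆) ih

lemma rank_ne_top (hA : UpClosed T A) (hr : IsLaverRanking T A τ r) (hτ : r τ ≠ ⊤)
    {σ : List ℕ} (h : InDerived T A τ r σ) (hτσ : τ <+: σ) : r σ ≠ ⊤ := by
  induction h with
  | stem σ h => exact (h.eq_of_length_le hτσ.length_le) ▸ hτ
  | dec σ n _ _ _ _ h => exact h.ne_top
  | mem σ n _ h₂ h₃ h₄ =>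
    have hσnA : σ ++ [n] ∈ A := hA σ h₃ _ h₄ (List.prefix_append σ [n])
    rw [((hr _ h₄ hτσ).1).mpr hσnA]
    exact WithTop.zero_ne_top
  | inf σ n _ h₂ _ _ _ h ih => exact absurd h (ih h₂)

lemma rank_append_lt {σ : List ℕ} {n : ℕ} (h : InDerived T A τ r (σ ++ [n]))
    (hτσ : τ <+: σ) (hσA : σ ∉ A) (hσ : r σ ≠ ⊤) : r (σ ++ [n]) < r σ := by
  generalize hσn : σ ++ [n] = σn at h
  cases h with
  | stem _ h =>
    have := (hσn ▸ h).length_le.trans hτσ.length_le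
    simp at this
  | dec σ' n' _ _ _ _ h =>
    obtain ⟨rfl, ⟨⟩⟩ := List.append_inj' hσn.symm rfl
    exact h
  | mem σ' n' _ _ h =>
    obtain ⟨rfl, -⟩ := List.append_inj' hσn.symm rfl
    exact absurd h hσA
  | inf σ' n' _ _ _ _ _ h =>
    obtain ⟨rfl, -⟩ := List.append_inj' hσn.symm rfl
    exact absurd h hσ

end InDerived

theorem isLaverTree_inDerived {T A : Set (List ℕ)} {τ : List ℕ} {r : List ℕ → WithTop Ordinal}
    (hT : IsLaverTree T τ) (hA : UpClosed T A) (hr : IsLaverRanking T A τ r) (hτ : r τ ≠ ⊤) :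
    IsLaverTree {σ | InDerived T A τ r σ} τ := by
  obtain ⟨hTtree, hτT, -, hTinf⟩ := hT
  refine ⟨fun σ hσ ρ hρσ => hσ.of_prefix hρσ, .stem τ (List.prefix_refl τ),
    fun σ hσ => hσ.comparable, fun σ hσ hτσ => ?_⟩
  have hσT : σ ∈ T := hσ.mem_tree hTtree hτT
  by_cases hσA : σ ∈ A
  · exact (hTinf σ hσT hτσ).mono fun n hn => .mem σ n hσ hτσ hσA hn
  · have hrσ : r σ ≠ ⊤ := hσ.rank_ne_top hA hr hτ hτσ
    exact ((hr σ hσT hτσ).2 hσA).1.mono fun n hn =>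
      .dec σ n hσ hτσ hσA hn.1 ((osucc_le_iff hrσ).mp hn.2) hrσ

theorem exists_initSeg_mem_of_forall_inDerived {T A : Set (List ℕ)} {τ : List ℕ}
    {r : List ℕ → WithTop Ordinal} (hA : UpClosed T A) (hr : IsLaverRanking T A τ r)
    (hτ : r τ ≠ ⊤) {g : ℕ → ℕ} (hg : ∀ n, InDerived T A τ r (initSeg g n)) :
    ∃ n, initSeg g n ∈ A := by
  by_contra! hgA
  have hτg : ∀ k, τ <+: initSeg g (τ.length + k) := fun k =>
    (hg _).stem_prefix (by simp)
  refine not_strictAnti_of_wellFoundedLT (fun k => r (initSeg g (τ.length + k)))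
    (strictAnti_nat_of_succ_lt fun k => ?_)
  have hsucc := hg (τ.length + k + 1)
  rw [initSeg_succ] at hsucc
  rw [← add_assoc, initSeg_succ]
  exact hsucc.rank_append_lt (hτg k) (hgA _) ((hg _).rank_ne_top hA hr hτ (hτg k))

theorem derived_tree_covered_by_A_general (T A : Set (List ℕ)) (τ : List ℕ)
    (hT : IsLaverTree T τ) (hA : UpClosed T A)
    (r : List ℕ → WithTop Ordinal) (hr : IsLaverRanking T A τ r)
    (hτ : r τ ≠ ⊤) :
    IsLaverTree {σ | InDerived T A τ r σ} τ ∧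
      ∀ g : ℕ → ℕ, (∀ n, InDerived T A τ r (initSeg g n)) →
        ∃ n, initSeg g n ∈ A :=
  ⟨isLaverTree_inDerived hT hA hr hτ,
    fun _ hg => exists_initSeg_mem_of_forall_inDerived hA hr hτ hg⟩

/-- if `T` is a Laver tree with stem `τ`, `A ⊆ T` is upwards closed,
and the canonical Laver ranking has `r τ < ∞`, then the derived tree `T_A` is a
Laver tree with stem `τ` and every infinite path through `T_A` meets `A`. -/
theorem derived_tree_covered_by_A (T A : Set (List ℕ)) (τ : List ℕ)
    (hT : IsLaverTree T τ) (hAT : A ⊆ T) (hA : UpClosed T A)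
    (r : List ℕ → WithTop Ordinal) (hr : IsLaverRanking T A τ r)
    (hτ : r τ ≠ ⊤) :
    IsLaverTree {σ | InDerived T A τ r σ} τ ∧
      ∀ g : ℕ → ℕ, (∀ n, InDerived T A τ r (initSeg g n)) →
        ∃ n, initSeg g n ∈ A :=
  derived_tree_covered_by_A_general T A τ hT hA r hr hτ
end

section
/- Let L be a linear order and suppose the set S = {a ∈ L : a bounds an infinite descending sequence} is nonempty and has no least element. Then L has a tight descending sequence, i.e., an infinite descending sequence (f(n)) such that for every a ∈ S there is an n with f(n) <_L a. -/
/-- let `L` be a countable linear order and let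
`S = {a : a bounds an infinite descending sequence}` (the ill-founded part of
`L`).  If `S` is nonempty and has no least element, then `L` has a tight
descending sequence: an infinite descending sequence `f` such that for every
`a ∈ S` there is `n` with `f n < a`. -/
theorem tight_descending_sequence_exists {L : Type*} [LinearOrder L] [Countable L]
    (S : Set L)
    (hS : S = {a : L | ∃ h : ℕ → L, h 0 ≤ a ∧ ∀ k, h (k + 1) < h k})
    (hne : S.Nonempty)
    (hnoleast : ¬ ∃ a ∈ S, ∀ b ∈ S, a ≤ b) :
    ∃ f : ℕ → L, (∀ n, f (n + 1) < f n) ∧ ∀ a ∈ S, ∃ n, f n < a := by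
  have hNL : Nonempty L := ⟨hne.choose⟩
  obtain ⟨g, hg⟩ := exists_surjective_nat L
  have hstep : ∀ a : {x // x ∈ S}, ∃ b : {x // x ∈ S}, (b : L) < a := by
    rintro ⟨a, ha⟩
    by_contra h
    push_neg at h
    exact hnoleast ⟨a, ha, fun b hb => le_of_not_gt (fun hlt => absurd (h ⟨b, hb⟩) (not_le_of_gt hlt))⟩
  choose step hstepl using hstep
  have hmin : ∀ (a : {x // x ∈ S}) (n : ℕ), min (a : L) (g n) ∈ S ∨ ¬ g n ∈ S := by
    intro a n
    by_cases h : g n ∈ S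
    · left
      rcases min_cases (a : L) (g n) with ⟨he, _⟩ | ⟨he, _⟩
      · rw [he]; exact a.2
      · rw [he]; exact h
    · right; exact h
  -- auxiliary: pick, for p and n, an element of S which is ≤ p and ≤ g n if g n ∈ S
  have t : ∀ (p : {x // x ∈ S}) (n : ℕ), {q : {x // x ∈ S} // (q : L) ≤ p ∧ (g n ∈ S → (q : L) ≤ g n)} := by
    intro p n
    by_cases h : g n ∈ S
    · refine ⟨⟨min (p : L) (g n), ?_⟩, min_le_left _ _, fun _ => min_le_right _ _⟩
      rcases (hmin p n) with hm | hm
      · exact hm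
      · exact absurd h hm
    · exact ⟨p, le_refl _, fun hc => absurd hc h⟩
  let F : ℕ → {x // x ∈ S} := fun n =>
    Nat.rec ⟨hne.choose, hne.choose_spec⟩ (fun n p => step (t p n).1) n
  have hFsucc : ∀ n, F (n + 1) = step (t (F n) n).1 := fun n => rfl
  refine ⟨fun n => (F n).1, ?_, ?_⟩
  · intro n
    calc (F (n+1)).1 < ((t (F n) n).1).1 := by rw [hFsucc]; exact hstepl _
      _ ≤ (F n).1 := (t (F n) n).2.1
  · intro a ha
    obtain ⟨n, rfl⟩ := hg a
    refine ⟨n + 1, ?_⟩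
    calc (F (n+1)).1 < ((t (F n) n).1).1 := by rw [hFsucc]; exact hstepl _
      _ ≤ g n := (t (F n) n).2.2 ha
end
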